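/- arXiv:2110.14238 — 3 statements merged into one kernel-verified Lean document; each statement's English description precedes it below -/
import Mathlib

section
/- Every value function on finite sequences is present focused: in the letter game on an automaton over finite words, every cautious strategy of Eve (one that never makes a move after which the best achievable value of some continuation strictly drops) is a winning strategy, i.e., for every finite word w played by Adam, the run ρ constructed by the cautious strategy satisfies Val(ρ) = A(w). -/
/-- A nondeterministic quantitative automaton over alphabet `A`:
states, an initial state, and a total transition relation with rational weights. -/
structure NQA (A : Type) where
  Q : Type
  init : Q
  δ : Q → A → Set (ℚ × Q)
  total : ∀ q a, (δ q a).Nonempty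

/-- `IsRunFrom M q u xs`: `xs` is the weight sequence of a run of `M` on the
finite word `u` starting in state `q`. -/
inductive IsRunFrom {A : Type} (M : NQA A) : M.Q → List A → List ℚ → Prop
  | nil (q : M.Q) : IsRunFrom M q [] []
  | cons {q : M.Q} {a : A} {u : List A} {x : ℚ} {q' : M.Q} {xs : List ℚ} :
      (x, q') ∈ M.δ q a → IsRunFrom M q' u xs → IsRunFrom M q (a :: u) (x :: xs)

/-- The value of the automaton on a finite word: supremum of values of runs. -/
noncomputable def AVal {A : Type} (M : NQA A) (Val : List ℚ → ℝ) (u : List A) : ℝ :=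
  sSup {r : ℝ | ∃ xs, IsRunFrom M M.init u xs ∧ Val xs = r}

/-- The state reached by Eve's letter-game strategy `s` (which picks a
transition from the word read so far and the current letter) after reading `u`,
starting from state `q` with word-history `pre`. -/
def stratStateAux {A : Type} (M : NQA A) (s : List A → A → ℚ × M.Q)
    (pre : List A) (q : M.Q) : List A → M.Q
  | [] => q
  | a :: u => stratStateAux M s (pre ++ [a]) (s pre a).2 u

/-- The state reached by strategy `s` after the word `u`. -/
def stratState {A : Type} (M : NQA A) (s : List A → A → ℚ × M.Q) (u : List A) : M.Q :=
  stratStateAux M s [] M.init u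

/-- The weights of the run built by strategy `s` on the word `u`. -/
def stratWeightsAux {A : Type} (M : NQA A) (s : List A → A → ℚ × M.Q)
    (pre : List A) : List A → List ℚ
  | [] => []
  | a :: u => (s pre a).1 :: stratWeightsAux M s (pre ++ [a]) u

def stratWeights {A : Type} (M : NQA A) (s : List A → A → ℚ × M.Q) (u : List A) : List ℚ :=
  stratWeightsAux M s [] u

/-- The strategy only uses transitions of the automaton. -/
def StratLegal {A : Type} (M : NQA A) (s : List A → A → ℚ × M.Q) : Prop :=
  ∀ u a, s u a ∈ M.δ (stratState M s u) a

/-- A strategy of Eve in the letter game is cautious if it never makes a move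
after which the best achievable value of some continuation strictly drops. -/
def Cautious {A : Type} (M : NQA A) (Val : List ℚ → ℝ) (s : List A → A → ℚ × M.Q) : Prop :=
  StratLegal M s ∧
  ∀ u a v,
    sSup {r : ℝ | ∃ xs, IsRunFrom M (stratState M s u) (a :: v) xs ∧
        r = Val (stratWeights M s u ++ xs)} ≤
    sSup {r : ℝ | ∃ ys, IsRunFrom M (s u a).2 v ys ∧
        r = Val (stratWeights M s u ++ (s u a).1 :: ys)}

/-- `M` is history deterministic: Eve wins her letter game, i.e. she has a
strategy building, letter by letter, runs achieving the automaton's value. -/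
def HistoryDet {A : Type} (M : NQA A) (Val : List ℚ → ℝ) : Prop :=
  ∃ s : List A → A → ℚ × M.Q, StratLegal M s ∧
    ∀ u : List A, AVal M Val u ≤ Val (stratWeights M s u)

/-- Weights of the run of the pruned (deterministic) automaton given by the
choice function `σ` from state `q` on a word. -/
def detWeights {A : Type} (M : NQA A) (σ : M.Q → A → ℚ × M.Q) : M.Q → List A → List ℚ
  | _, [] => []
  | q, a :: u => (σ q a).1 :: detWeights M σ (σ q a).2 u

/-- `M` is determinizable by pruning: some choice of a single transition per
state-letter pair yields an equivalent deterministic automaton. -/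
def DetByPruning {A : Type} (M : NQA A) (Val : List ℚ → ℝ) : Prop :=
  ∃ σ : M.Q → A → ℚ × M.Q, (∀ q a, σ q a ∈ M.δ q a) ∧
    ∀ u : List A, Val (detWeights M σ M.init u) = AVal M Val u

/-! Cautiousness says exactly that the best value reachable by continuing the strategy's run never
drops when the strategy commits to a transition. Starting from `A(w)`, the best continuation of the
empty run over `w`, and following the strategy letter by letter, one arrives at the best continuation
of the strategy's run over the empty word, which is the value of that run. Conversely that run is a
run on `w`, and with finitely many runs the supremum `A(w)` bounds its value. -/

section

variable {A : Type} (M : NQA A)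

noncomputable def bestContinuation (Val : List ℚ → ℝ) (ρ : List ℚ) (q : M.Q) (v : List A) : ℝ :=
  sSup {r : ℝ | ∃ xs, IsRunFrom M q v xs ∧ r = Val (ρ ++ xs)}

theorem bestContinuation_nil (Val : List ℚ → ℝ) (ρ : List ℚ) (q : M.Q) :
    bestContinuation M Val ρ q [] = Val ρ := by
  have hruns : {r : ℝ | ∃ xs, IsRunFrom M q [] xs ∧ r = Val (ρ ++ xs)} = {Val ρ} := by
    ext r
    constructor
    · rintro ⟨xs, ⟨⟩, rfl⟩
      simp
    · rintro rfl
      exact ⟨[], .nil q, by simp⟩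
  rw [bestContinuation, hruns, csSup_singleton]

theorem bestContinuation_init (Val : List ℚ → ℝ) (u : List A) :
    bestContinuation M Val [] M.init u = AVal M Val u := by
  simp only [bestContinuation, AVal, List.nil_append, eq_comm]

theorem finite_setOf_isRunFrom (hfin : ∀ q a, (M.δ q a).Finite) :
    ∀ (v : List A) (q : M.Q), {xs | IsRunFrom M q v xs}.Finite
  | [], q => (Set.finite_singleton []).subset fun _ hrun => by cases hrun; rfl
  | a :: v, q =>
    ((hfin q a).biUnion fun p _ => (finite_setOf_isRunFrom hfin v p.2).image (p.1 :: ·)).subset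
      fun _ hrun => by
        cases hrun with
        | cons htr hrest => exact Set.mem_biUnion htr ⟨_, hrest, rfl⟩

theorem le_AVal_of_isRunFrom (Val : List ℚ → ℝ) (hfin : ∀ q a, (M.δ q a).Finite)
    {u : List A} {xs : List ℚ} (hrun : IsRunFrom M M.init u xs) : Val xs ≤ AVal M Val u :=
  le_csSup ((finite_setOf_isRunFrom M hfin u M.init).image Val).bddAbove ⟨xs, hrun, rfl⟩

section Strategy

variable {M} (s : List A → A → ℚ × M.Q)

theorem stratStateAux_append (u : List A) :
    ∀ (pre : List A) (q : M.Q) (v : List A),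
      stratStateAux M s pre q (u ++ v) =
        stratStateAux M s (pre ++ u) (stratStateAux M s pre q u) v := by
  induction u with
  | nil => simp [stratStateAux]
  | cons a u ih => simp [stratStateAux, ih]

theorem stratWeightsAux_append (u : List A) :
    ∀ (pre v : List A),
      stratWeightsAux M s pre (u ++ v) =
        stratWeightsAux M s pre u ++ stratWeightsAux M s (pre ++ u) v := by
  induction u with
  | nil => simp [stratWeightsAux]
  | cons a u ih => simp [stratWeightsAux, ih]

theorem stratState_append_singleton (u : List A) (a : A) :
    stratState M s (u ++ [a]) = (s u a).2 := by
  simp [stratState, stratStateAux_append, stratStateAux]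

theorem stratWeights_append_singleton (u : List A) (a : A) :
    stratWeights M s (u ++ [a]) = stratWeights M s u ++ [(s u a).1] := by
  simp [stratWeights, stratWeightsAux_append, stratWeightsAux]

theorem StratLegal.isRunFrom_stratWeightsAux (hl : StratLegal M s) (v : List A) :
    ∀ u : List A, IsRunFrom M (stratState M s u) v (stratWeightsAux M s u v) := by
  induction v with
  | nil => exact fun _ => .nil _
  | cons a v ih =>
    intro u
    have hrest := ih (u ++ [a])
    rw [stratState_append_singleton] at hrest
    exact .cons (hl u a) hrest

theorem StratLegal.isRunFrom_stratWeights (hl : StratLegal M s) (u : List A) :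
    IsRunFrom M M.init u (stratWeights M s u) :=
  hl.isRunFrom_stratWeightsAux s u []

variable {Val : List ℚ → ℝ}

theorem Cautious.bestContinuation_cons_le (hc : Cautious M Val s) (u : List A) (a : A)
    (v : List A) :
    bestContinuation M Val (stratWeights M s u) (stratState M s u) (a :: v) ≤
      bestContinuation M Val (stratWeights M s (u ++ [a])) (stratState M s (u ++ [a])) v := by
  simpa only [bestContinuation, stratState_append_singleton, stratWeights_append_singleton,
    List.append_assoc, List.singleton_append] using hc.2 u a v

theorem Cautious.bestContinuation_le (hc : Cautious M Val s) (v : List A) :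
    ∀ u : List A, bestContinuation M Val (stratWeights M s u) (stratState M s u) v ≤
      Val (stratWeights M s (u ++ v)) := by
  induction v with
  | nil => simp only [bestContinuation_nil, List.append_nil, le_refl, implies_true]
  | cons a v ih =>
    intro u
    calc _ ≤ _ := hc.bestContinuation_cons_le s u a v
      _ ≤ _ := ih (u ++ [a])
      _ = _ := by rw [List.append_assoc, List.singleton_append]

end Strategy

end

/-- Every value function on finite sequences is present focused:
in the letter game on an automaton over finite words (with finitely many
transitions per state-letter pair, so maxima over runs are attained), every
cautious strategy of Eve is winning: for every finite word w played by Adam, the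
run built by the strategy satisfies Val(ρ) = A(w). -/
theorem finite_words_present_focused {A : Type} (M : NQA A) (Val : List ℚ → ℝ)
    (hfin : ∀ q a, (M.δ q a).Finite)
    (s : List A → A → ℚ × M.Q) (hc : Cautious M Val s) :
    ∀ u : List A, Val (stratWeights M s u) = AVal M Val u := by
  intro u
  have hwin : AVal M Val u ≤ Val (stratWeights M s u) := by
    have hfrom_start := hc.bestContinuation_le s u []
    rwa [List.nil_append, stratWeights, stratWeightsAux, stratState, stratStateAux,
      bestContinuation_init] at hfrom_start
  exact le_antisymm (le_AVal_of_isRunFrom M Val hfin (hc.1.isRunFrom_stratWeights s u)) hwin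
end

section
/- If Val is a present-focused and suffix-monotonic value function, then any positional strategy that only uses transitions used by some cautious strategy in the letter game on a nondeterministic Val-automaton A is itself cautious. -/
/-- The state reached by a positional strategy `p` on the word `u`. -/
def posState {A : Type} (M : NQA A) (p : M.Q → A → ℚ × M.Q) (u : List A) : M.Q :=
  u.foldl (fun q a => (p q a).2) M.init

/-- A positional strategy viewed as a letter-game (history-based) strategy. -/
def posStrat {A : Type} (M : NQA A) (p : M.Q → A → ℚ × M.Q) :
    List A → A → ℚ × M.Q := fun u a => p (posState M p u) a


/-!
Cautiousness of a move only compares, for each run from the current state, the value of the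
history followed by that run with the value of the history followed by a run that starts with
the chosen transition. Runs on a word are finitely many, so both suprema are attained and the
comparison is a statement about individual runs. Suffix monotonicity makes that statement
independent of the history. Every move of the positional strategy is a move of `s` from the same
state, with a possibly different history, so it inherits cautiousness from `s`.
-/

section Order

variable {α β γ : Type*} [ConditionallyCompleteLinearOrder γ]

theorem csSup_image_le_csSup_image_iff {f : α → γ} {g : β → γ} {X : Set α} {Y : Set β}
    (hX : X.Finite) (hXne : X.Nonempty) (hY : Y.Finite) (hYne : Y.Nonempty) :
    sSup (f '' X) ≤ sSup (g '' Y) ↔ ∀ x ∈ X, ∃ y ∈ Y, f x ≤ g y := by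
  constructor
  · intro h x hx
    obtain ⟨y, hy, hmax⟩ := (hYne.image g).csSup_mem (hY.image g)
    exact ⟨y, hy, hmax ▸ (le_csSup (hX.image f).bddAbove (Set.mem_image_of_mem f hx)).trans h⟩
  · intro h
    refine csSup_le (hXne.image f) ?_
    rintro _ ⟨x, hx, rfl⟩
    obtain ⟨y, hy, hxy⟩ := h x hx
    exact hxy.trans (le_csSup (hY.image g).bddAbove (Set.mem_image_of_mem g hy))

end Order

variable {A : Type}

def SuffixMonotone (Val : List ℚ → ℝ) : Prop :=
  ∀ (S : Finset ℚ) (α β β' : List ℚ),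
    (∀ x ∈ α, x ∈ S) → (∀ x ∈ β, x ∈ S) → (∀ x ∈ β', x ∈ S) →
    (Val β ≥ Val β' ↔ Val (α ++ β) ≥ Val (α ++ β'))

theorem SuffixMonotone.le_append_of_le_append {Val : List ℚ → ℝ} (hSM : SuffixMonotone Val)
    {α α' β β' : List ℚ} (h : Val (α ++ β) ≤ Val (α ++ β')) :
    Val (α' ++ β) ≤ Val (α' ++ β') := by
  set S := (α ++ α' ++ β ++ β').toFinset
  have hβ' : Val β ≤ Val β' :=
    (hSM S α β' β (fun x hx => by simp [S, hx]) (fun x hx => by simp [S, hx])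
      (fun x hx => by simp [S, hx])).2 h
  exact (hSM S α' β' β (fun x hx => by simp [S, hx]) (fun x hx => by simp [S, hx])
    (fun x hx => by simp [S, hx])).1 hβ'

namespace NQA

variable (M : NQA A)

def runs (q : M.Q) (u : List A) : Set (List ℚ) := {xs | IsRunFrom M q u xs}

theorem runs_finite (hfin : ∀ q a, (M.δ q a).Finite) (q : M.Q) (u : List A) :
    (M.runs q u).Finite := by
  induction u generalizing q with
  | nil =>
    refine (Set.finite_singleton []).subset ?_
    rintro xs ⟨⟩
    rfl
  | cons a u ih =>
    refine ((hfin q a).biUnion fun t _ => (ih t.2).image (t.1 :: ·)).subset ?_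
    rintro _ (hrun : IsRunFrom M q (a :: u) _)
    cases hrun with
    | cons ht hxs => exact Set.mem_biUnion ht ⟨_, hxs, rfl⟩

theorem runs_nonempty (q : M.Q) (u : List A) : (M.runs q u).Nonempty := by
  induction u generalizing q with
  | nil => exact ⟨[], IsRunFrom.nil q⟩
  | cons a u ih =>
    obtain ⟨⟨x, q'⟩, ht⟩ := M.total q a
    obtain ⟨xs, hxs⟩ := ih q'
    exact ⟨x :: xs, IsRunFrom.cons ht hxs⟩

theorem setOf_run_values_eq_image (q : M.Q) (u : List A) (f : List ℚ → ℝ) :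
    {r : ℝ | ∃ xs, IsRunFrom M q u xs ∧ r = f xs} = f '' M.runs q u := by
  ext r
  simp [runs, eq_comm]

theorem sSup_run_values_le_iff (hfin : ∀ q a, (M.δ q a).Finite) (Val : List ℚ → ℝ)
    (w : List ℚ) (q q' : M.Q) (u u' : List A) (x : ℚ) :
    sSup {r : ℝ | ∃ xs, IsRunFrom M q u xs ∧ r = Val (w ++ xs)} ≤
        sSup {r : ℝ | ∃ ys, IsRunFrom M q' u' ys ∧ r = Val (w ++ x :: ys)} ↔
      ∀ xs ∈ M.runs q u, ∃ ys ∈ M.runs q' u', Val (w ++ xs) ≤ Val (w ++ x :: ys) := by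
  rw [setOf_run_values_eq_image, setOf_run_values_eq_image]
  exact csSup_image_le_csSup_image_iff (M.runs_finite hfin q u) (M.runs_nonempty q u)
    (M.runs_finite hfin q' u') (M.runs_nonempty q' u')

theorem stratStateAux_posStrat (p : M.Q → A → ℚ × M.Q) (u pre : List A) :
    stratStateAux M (posStrat M p) pre (posState M p pre) u = posState M p (pre ++ u) := by
  induction u generalizing pre with
  | nil => simp [stratStateAux]
  | cons a u ih =>
    have hstep : (posStrat M p pre a).2 = posState M p (pre ++ [a]) := by
      simp [posStrat, posState, List.foldl_append]
    simp [stratStateAux, hstep, ih]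

theorem stratState_posStrat (p : M.Q → A → ℚ × M.Q) (u : List A) :
    stratState M (posStrat M p) u = posState M p u := by
  simpa [stratState, posState] using M.stratStateAux_posStrat p u []

end NQA

theorem positional_pruning_cautious_general {A : Type} (Val : List ℚ → ℝ)
    (hSM : ∀ (S : Finset ℚ) (α β β' : List ℚ),
      (∀ x ∈ α, x ∈ S) → (∀ x ∈ β, x ∈ S) → (∀ x ∈ β', x ∈ S) →
      (Val β ≥ Val β' ↔ Val (α ++ β) ≥ Val (α ++ β')))
    (M : NQA A) (hfin : ∀ q a, (M.δ q a).Finite)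
    (s : List A → A → ℚ × M.Q) (hc : Cautious M Val s)
    (p : M.Q → A → ℚ × M.Q)
    (hp : ∀ q a, ∃ u : List A, stratState M s u = q ∧ s u a = p q a) :
    Cautious M Val (posStrat M p) := by
  have hSM : SuffixMonotone Val := hSM
  refine ⟨fun u a => ?_, fun u a v => ?_⟩ <;>
    obtain ⟨u₀, hq, ha⟩ := hp (posState M p u) a <;>
    rw [M.stratState_posStrat]
  · have hlegal := hc.1 u₀ a
    rw [hq, ha] at hlegal
    exact hlegal
  · have hcaut := hc.2 u₀ a v
    rw [hq, ha, M.sSup_run_values_le_iff hfin] at hcaut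
    rw [M.sSup_run_values_le_iff hfin]
    intro xs hxs
    obtain ⟨ys, hys, hle⟩ := hcaut xs hxs
    exact ⟨ys, hys, hSM.le_append_of_le_append hle⟩

/-- If Val is present focused (every cautious strategy in the
letter game on any Val-automaton over `A` is winning) and suffix monotonic,
then any positional strategy that only uses transitions used by some cautious
strategy `s` in the letter game on `M` is itself cautious. -/
theorem positional_pruning_cautious {A : Type} (Val : List ℚ → ℝ)
    (hPF : ∀ (M' : NQA A) (s' : List A → A → ℚ × M'.Q), Cautious M' Val s' →
      ∀ u : List A, Val (stratWeights M' s' u) = AVal M' Val u)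
    (hSM : ∀ (S : Finset ℚ) (α β β' : List ℚ),
      (∀ x ∈ α, x ∈ S) → (∀ x ∈ β, x ∈ S) → (∀ x ∈ β', x ∈ S) →
      (Val β ≥ Val β' ↔ Val (α ++ β) ≥ Val (α ++ β')))
    (M : NQA A) (hfin : ∀ q a, (M.δ q a).Finite)
    (s : List A → A → ℚ × M.Q) (hc : Cautious M Val s)
    (p : M.Q → A → ℚ × M.Q)
    (hp : ∀ q a, ∃ u : List A, stratState M s u = q ∧ s u a = p q a) :
    Cautious M Val (posStrat M p) :=
  positional_pruning_cautious_general Val hSM M hfin s hc p hp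
end

section
/- For a λ-discounted-sum automaton with maximal absolute transition weight m, if Eve plays a cautious strategy in the letter game, then for every infinite word w, every position i, and every run r′ on w, the cautious run r satisfies Val(r′[0..i]) − Val(r[0..i]) ≤ 2m·λ^i/(1−λ); consequently DSum(r) equals the automaton's value on w, so DSum on infinite words is present focused. -/
/-- `InfRunFrom M q w qs xs`: `qs`/`xs` are the states/weights of an infinite
run of `M` on the infinite word `w` starting in state `q`. -/
def InfRunFrom {A : Type} (M : NQA A) (q : M.Q) (w : ℕ → A)
    (qs : ℕ → M.Q) (xs : ℕ → ℚ) : Prop :=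
  qs 0 = q ∧ ∀ i, (xs i, qs (i + 1)) ∈ M.δ (qs i) (w i)

/-- Discounted sum of an infinite weight sequence. -/
noncomputable def DSumInf (lam : ℝ) (xs : ℕ → ℚ) : ℝ := ∑' i : ℕ, lam ^ i * (xs i : ℝ)

/-- The value of a λ-discounted-sum automaton from state `q` on an infinite word. -/
noncomputable def DSumVal {A : Type} (M : NQA A) (lam : ℝ) (q : M.Q) (w : ℕ → A) : ℝ :=
  sSup {r : ℝ | ∃ qs xs, InfRunFrom M q w qs xs ∧ r = DSumInf lam xs}

/-- Prepending a finite word to an infinite word. -/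
def wordCat {A : Type} (u : List A) (v : ℕ → A) : ℕ → A := fun i =>
  if h : i < u.length then u.get ⟨i, h⟩ else v (i - u.length)

/-- Prepending a finite weight sequence to an infinite one. -/
def qcat (α : List ℚ) (xs : ℕ → ℚ) : ℕ → ℚ := fun i =>
  if h : i < α.length then α.get ⟨i, h⟩ else xs (i - α.length)

/-- The prefix of length `n` of an infinite word. -/
def pref {A : Type} (w : ℕ → A) (n : ℕ) : List A := List.ofFn (fun i : Fin n => w i)

/-- The weight sequence of the run built by strategy `s` on the infinite word `w`. -/
def stratWInf {A : Type} (M : NQA A) (s : List A → A → ℚ × M.Q) (w : ℕ → A) : ℕ → ℚ :=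
  fun n => (s (pref w n) (w n)).1

/-- Eve's strategy `s` is cautious (for discounted sum on infinite words): after
any finite word `u`, for every infinite continuation `v` there is a run from the
current state whose discounted sum, together with the weights produced so far,
equals the automaton's value on `uv`. -/
def CautiousDSum {A : Type} (M : NQA A) (lam : ℝ) (s : List A → A → ℚ × M.Q) : Prop :=
  StratLegal M s ∧
  ∀ (u : List A) (v : ℕ → A), ∃ qs xs,
    InfRunFrom M (stratState M s u) v qs xs ∧
    DSumInf lam (qcat (stratWeights M s u) xs) = DSumVal M lam M.init (wordCat u v)

/-!
Weights bounded by `m` make every tail of a discounted sum from position `n` at most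
`λ^n m/(1-λ)` in absolute value. Cautiousness after the prefix of length `n` of `w` gives a
run whose value is the automaton's value on `w` and whose first `n` weights are those of
Eve's run, so the value on `w` exceeds Eve's partial sum by at most one such tail, while any
other run's partial sum exceeds the value by at most one more. Letting `n → ∞` shows that
Eve's run attains the value.
-/

open Finset Filter Topology

section DiscountedSum

variable {lam m : ℝ} {f : ℕ → ℝ}

theorem summable_pow_mul_of_abs_le (hlam0 : 0 ≤ lam) (hlam1 : lam < 1)
    (hf : ∀ i, |f i| ≤ m) : Summable fun i => lam ^ i * f i :=
  .of_norm_bounded ((summable_geometric_of_lt_one hlam0 hlam1).mul_left m) fun i => by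
    rw [Real.norm_eq_abs, abs_mul, abs_pow, abs_of_nonneg hlam0, mul_comm]
    exact mul_le_mul_of_nonneg_right (hf i) (pow_nonneg hlam0 i)

theorem abs_tsum_pow_mul_sub_sum_range_le (hlam0 : 0 ≤ lam) (hlam1 : lam < 1)
    (hf : ∀ i, |f i| ≤ m) (n : ℕ) :
    |∑' i, lam ^ i * f i - ∑ i ∈ range n, lam ^ i * f i| ≤ lam ^ n * (m / (1 - lam)) := by
  rw [← (summable_pow_mul_of_abs_le hlam0 hlam1 hf).sum_add_tsum_nat_add n, add_sub_cancel_left,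
    ← Real.norm_eq_abs, mul_div_assoc', div_eq_mul_inv]
  refine tsum_of_norm_bounded ((hasSum_geometric_of_lt_one hlam0 hlam1).mul_left (lam ^ n * m))
    fun i => ?_
  rw [Real.norm_eq_abs, abs_mul, abs_pow, abs_of_nonneg hlam0, pow_add]
  calc lam ^ i * lam ^ n * |f (i + n)| ≤ lam ^ i * lam ^ n * m := by gcongr; exact hf _
    _ = lam ^ n * m * lam ^ i := by ring

theorem abs_tsum_pow_mul_le (hlam0 : 0 ≤ lam) (hlam1 : lam < 1) (hf : ∀ i, |f i| ≤ m) :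
    |∑' i, lam ^ i * f i| ≤ m / (1 - lam) := by
  simpa using abs_tsum_pow_mul_sub_sum_range_le hlam0 hlam1 hf 0

end DiscountedSum

theorem qcat_ofFn_of_lt {n j : ℕ} (x ys : ℕ → ℚ) (hj : j < n) :
    qcat (List.ofFn fun i : Fin n => x i) ys j = x j := by
  simp [qcat, hj]

theorem qcat_ofFn_add (n k : ℕ) (x ys : ℕ → ℚ) :
    qcat (List.ofFn fun i : Fin n => x i) ys (k + n) = ys k := by
  simp [qcat]

theorem DSumInf_qcat_ofFn {lam : ℝ} (n : ℕ) (x ys : ℕ → ℚ)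
    (hys : Summable fun i => lam ^ i * (ys i : ℝ)) :
    DSumInf lam (qcat (List.ofFn fun i : Fin n => x i) ys) =
      ∑ j ∈ range n, lam ^ j * (x j : ℝ) + lam ^ n * DSumInf lam ys := by
  set g : ℕ → ℝ := fun i => lam ^ i * (qcat (List.ofFn fun i : Fin n => x i) ys i : ℝ)
  have hg_tail : ∀ k, g (k + n) = lam ^ n * (lam ^ k * (ys k : ℝ)) := fun k => by
    simp only [g, qcat_ofFn_add, pow_add]
    ring
  have hg : Summable g := (summable_nat_add_iff n).mp <| by
    simpa only [hg_tail] using hys.mul_left (lam ^ n)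
  rw [DSumInf, ← hg.sum_add_tsum_nat_add n, DSumInf, ← tsum_mul_left]
  congr 1
  · exact sum_congr rfl fun j hj => by simp only [g, qcat_ofFn_of_lt x ys (mem_range.mp hj)]
  · exact tsum_congr hg_tail

section Strategy

variable {A : Type} (M : NQA A) (s : List A → A → ℚ × M.Q)

theorem pref_succ (w : ℕ → A) (n : ℕ) : pref w (n + 1) = pref w n ++ [w n] := by
  rw [pref, List.ofFn_succ']
  simp [pref]

theorem wordCat_pref (w : ℕ → A) (n : ℕ) : wordCat (pref w n) (fun k => w (k + n)) = w := by
  funext i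
  by_cases hi : i < n
  · simp [wordCat, pref, hi]
  · simp [wordCat, pref, hi, Nat.sub_add_cancel (not_lt.mp hi)]

theorem stratStateAux_append_singleton (a : A) :
    ∀ (u pre : List A) (q : M.Q), stratStateAux M s pre q (u ++ [a]) = (s (pre ++ u) a).2
  | [], pre, q => by simp [stratStateAux]
  | b :: u, pre, q => by
    simp [stratStateAux, stratStateAux_append_singleton a u]

theorem stratWeightsAux_append_singleton (a : A) :
    ∀ (u pre : List A),
      stratWeightsAux M s pre (u ++ [a]) = stratWeightsAux M s pre u ++ [(s (pre ++ u) a).1]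
  | [], pre => by simp [stratWeightsAux]
  | b :: u, pre => by
    simp [stratWeightsAux, stratWeightsAux_append_singleton a u]

theorem stratState_pref_succ (w : ℕ → A) (n : ℕ) :
    stratState M s (pref w (n + 1)) = (s (pref w n) (w n)).2 := by
  rw [stratState, pref_succ, stratStateAux_append_singleton, List.nil_append]

theorem stratWeights_pref (w : ℕ → A) :
    ∀ n, stratWeights M s (pref w n) = List.ofFn fun j : Fin n => stratWInf M s w j
  | 0 => rfl
  | n + 1 => by
    rw [pref_succ, stratWeights, stratWeightsAux_append_singleton, List.nil_append,
      ← stratWeights, stratWeights_pref w n, List.ofFn_succ']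
    simp [stratWInf, List.concat_eq_append]

theorem infRunFrom_stratWInf (hs : StratLegal M s) (w : ℕ → A) :
    InfRunFrom M M.init w (fun n => stratState M s (pref w n)) (stratWInf M s w) :=
  ⟨rfl, fun n => by dsimp only; rw [stratState_pref_succ]; exact hs (pref w n) (w n)⟩

end Strategy

section Bounded

variable {A : Type} {M : NQA A} {lam m : ℝ}

theorem InfRunFrom.abs_weight_le (hm : ∀ q a x q', (x, q') ∈ M.δ q a → |(x : ℝ)| ≤ m)
    {q : M.Q} {w : ℕ → A} {qs : ℕ → M.Q} {xs : ℕ → ℚ} (h : InfRunFrom M q w qs xs) (i : ℕ) :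
    |(xs i : ℝ)| ≤ m :=
  hm _ _ _ _ (h.2 i)

theorem DSumInf_le_DSumVal (hlam0 : 0 ≤ lam) (hlam1 : lam < 1)
    (hm : ∀ q a x q', (x, q') ∈ M.δ q a → |(x : ℝ)| ≤ m)
    {q : M.Q} {w : ℕ → A} {qs : ℕ → M.Q} {xs : ℕ → ℚ} (h : InfRunFrom M q w qs xs) :
    DSumInf lam xs ≤ DSumVal M lam q w := by
  refine le_csSup ⟨m / (1 - lam), ?_⟩ ⟨qs, xs, h, rfl⟩
  rintro _ ⟨qs', xs', h', rfl⟩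
  exact le_of_abs_le (abs_tsum_pow_mul_le hlam0 hlam1 (h'.abs_weight_le hm))

theorem DSumVal_le_sum_range_stratWInf_add (hlam0 : 0 ≤ lam) (hlam1 : lam < 1)
    (hm : ∀ q a x q', (x, q') ∈ M.δ q a → |(x : ℝ)| ≤ m)
    {s : List A → A → ℚ × M.Q} (hc : CautiousDSum M lam s) (w : ℕ → A) (n : ℕ) :
    DSumVal M lam M.init w ≤
      ∑ j ∈ range n, lam ^ j * (stratWInf M s w j : ℝ) + lam ^ n * (m / (1 - lam)) := by
  obtain ⟨qs, ys, hrun, hval⟩ := hc.2 (pref w n) fun k => w (k + n)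
  have hys := hrun.abs_weight_le hm
  rw [wordCat_pref, stratWeights_pref,
    DSumInf_qcat_ofFn n _ ys (summable_pow_mul_of_abs_le hlam0 hlam1 hys)] at hval
  rw [← hval]
  gcongr
  exact le_of_abs_le (abs_tsum_pow_mul_le hlam0 hlam1 hys)

theorem sum_range_sub_sum_range_stratWInf_le (hlam0 : 0 ≤ lam) (hlam1 : lam < 1)
    (hm : ∀ q a x q', (x, q') ∈ M.δ q a → |(x : ℝ)| ≤ m)
    {s : List A → A → ℚ × M.Q} (hc : CautiousDSum M lam s)
    {w : ℕ → A} {qs : ℕ → M.Q} {xs : ℕ → ℚ} (h : InfRunFrom M M.init w qs xs) (n : ℕ) :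
    ∑ j ∈ range n, lam ^ j * (xs j : ℝ) - ∑ j ∈ range n, lam ^ j * (stratWInf M s w j : ℝ) ≤
      2 * (lam ^ n * (m / (1 - lam))) := by
  have hxs_tail := (abs_le.mp <|
    abs_tsum_pow_mul_sub_sum_range_le hlam0 hlam1 (h.abs_weight_le hm) n).1
  have hxs_le : ∑' i, lam ^ i * (xs i : ℝ) ≤ _ := DSumInf_le_DSumVal hlam0 hlam1 hm h
  have hval_le := DSumVal_le_sum_range_stratWInf_add hlam0 hlam1 hm hc w n
  linarith

end Bounded

/-- For a λ-discounted-sum automaton with transition weights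
bounded in absolute value by `m`, if Eve plays a cautious strategy in the letter
game, then for every infinite word `w`, every position `i`, and every run on
`w`, the cautious run's partial discounted sum is within 2m·λ^i/(1−λ) of that of
the other run; consequently the cautious run achieves the automaton's value on
`w`, so DSum on infinite words is present focused. -/
theorem dsum_present_focused {A : Type} (M : NQA A) (lam m : ℝ)
    (hlam0 : 0 < lam) (hlam1 : lam < 1)
    (hm : ∀ q a x q', (x, q') ∈ M.δ q a → |(x : ℝ)| ≤ m)
    (s : List A → A → ℚ × M.Q) (hc : CautiousDSum M lam s) :
    ∀ w : ℕ → A,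
      (∀ qs xs, InfRunFrom M M.init w qs xs → ∀ i : ℕ,
        (∑ j ∈ Finset.range (i + 1), lam ^ j * (xs j : ℝ)) -
          (∑ j ∈ Finset.range (i + 1), lam ^ j * (stratWInf M s w j : ℝ)) ≤
        2 * m * lam ^ i / (1 - lam)) ∧
      DSumInf lam (stratWInf M s w) = DSumVal M lam M.init w := by
  intro w
  refine ⟨fun qs xs h i => ?_, ?_⟩
  · have hm0 : 0 ≤ m := (abs_nonneg _).trans (h.abs_weight_le hm 0)
    have hpow : lam ^ (i + 1) ≤ lam ^ i := pow_le_pow_of_le_one hlam0.le hlam1.le i.le_succ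
    calc _ ≤ 2 * (lam ^ (i + 1) * (m / (1 - lam))) :=
          sum_range_sub_sum_range_stratWInf_le hlam0.le hlam1 hm hc h (i + 1)
      _ ≤ 2 * (lam ^ i * (m / (1 - lam))) := by gcongr
      _ = 2 * m * lam ^ i / (1 - lam) := by ring
  · have hstrat := infRunFrom_stratWInf M s hc.1 w
    refine (DSumInf_le_DSumVal hlam0.le hlam1 hm hstrat).antisymm ?_
    have hpartial : Tendsto (fun n => ∑ j ∈ range n, lam ^ j * (stratWInf M s w j : ℝ)) atTop
        (𝓝 (DSumInf lam (stratWInf M s w))) :=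
      (summable_pow_mul_of_abs_le hlam0.le hlam1 (hstrat.abs_weight_le hm)).hasSum.tendsto_sum_nat
    have htail : Tendsto (fun n => lam ^ n * (m / (1 - lam))) atTop (𝓝 0) := by
      simpa using (tendsto_pow_atTop_nhds_zero_of_lt_one hlam0.le hlam1).mul_const (m / (1 - lam))
    simpa using le_of_tendsto_of_tendsto' tendsto_const_nhds (hpartial.add htail)
      (DSumVal_le_sum_range_stratWInf_add hlam0.le hlam1 hm hc w)
end
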